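/- Let d ≥ 2 and let N be a norm on the d × d complex matrices that is unitarily invariant: N(U*X*V) = N(X) for all unitary matrices U, V. Let F be the diagonal matrix diag(1, 1, 0, …, 0). Then for every d × d complex matrix X, (σ₁(X) + σ₂(X))/2 ≤ N(X)/N(F) ≤ max(σ₁(X), (∑ i, σ_i(X))/2), where σ₁(X) ≥ σ₂(X) ≥ … are the singular values of X. -/

import Mathlib

open Matrix BigOperators

/-- The entries of `v` sorted in non-increasing order: `sortedDesc v 0` is the largest, etc. -/
noncomputable def sortedDesc {d : ℕ} (v : Fin d → ℝ) : Fin d → ℝ :=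
  fun k => v (Tuple.sort v k.rev)

/-- The singular values of `X` in non-increasing order:
`singularValues X 0 = σ₁(X)`, `singularValues X 1 = σ₂(X)`, ... -/
noncomputable def singularValues {d : ℕ} (X : Matrix (Fin d) (Fin d) ℂ) : Fin d → ℝ :=
  sortedDesc fun i => Real.sqrt ((Matrix.isHermitian_conjTranspose_mul_self X).eigenvalues i)

/-!
By the singular value decomposition and unitary invariance, `N X = p σ(X)` and `N F = p 𝟙_{0,1}`,
where `p x = N (diagonal x)` is a seminorm on `ℝᵈ` invariant under permutations and sign
changes of the coordinates (a symmetric gauge function). Such a `p` is monotone in `|x|`.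

Lower bound: `((σ₁ + σ₂)/2) • 𝟙_{0,1}` is the average of `(σ₁, σ₂, 0, …)` and of its image under
the swap of the first two coordinates, and `(σ₁, σ₂, 0, …) ≤ σ` coordinatewise.

Upper bound: with `M = max(σ₁, ∑ σᵢ / 2)`, the vector `σ` lies in the capped simplex
`{0 ≤ x ≤ M, ∑ xᵢ ≤ 2M}`, which is the convex hull of the vectors in `[0, M]ᵈ` with at most two
nonzero coordinates, and on each of those `p ≤ M · p 𝟙_{0,1}`. For the convex hull, induct on
the number of coordinates strictly between `0` and `M`: if there are two, shifting mass between
them in either direction until one hits `0` or `M` gives two points with fewer such coordinates,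
and `x` lies on the segment joining them.
-/

section CappedSimplex

open Finset

variable {ι : Type*}

def cappedSimplex [Fintype ι] (M : ℝ) (k : ℕ) : Set (ι → ℝ) :=
  {x | (∀ i, 0 ≤ x i ∧ x i ≤ M) ∧ ∑ i, x i ≤ k * M}

def sparseBox [Fintype ι] (M : ℝ) (k : ℕ) : Set (ι → ℝ) :=
  {x | (∀ i, 0 ≤ x i ∧ x i ≤ M) ∧ #{i | x i ≠ 0} ≤ k}

noncomputable def fractionalCoords [Fintype ι] (M : ℝ) (x : ι → ℝ) : Finset ι :=
  {i | 0 < x i ∧ x i < M}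

/-- Moves mass from coordinate `j` to coordinate `i` until `i` reaches `M` or `j` reaches `0`. -/
noncomputable def shiftMass [DecidableEq ι] (M : ℝ) (x : ι → ℝ) (i j : ι) : ι → ℝ :=
  x + min (M - x i) (x j) • (Pi.single i 1 - Pi.single j 1)

variable {M : ℝ} {k : ℕ} {x : ι → ℝ}

@[simp]
theorem mem_fractionalCoords [Fintype ι] {i : ι} :
    i ∈ fractionalCoords M x ↔ 0 < x i ∧ x i < M := by
  simp [fractionalCoords]

theorem shiftMass_apply [DecidableEq ι] {i j : ι} (hij : i ≠ j) (l : ι) :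
    shiftMass M x i j l =
      if l = i then x i + min (M - x i) (x j)
      else if l = j then x j - min (M - x i) (x j) else x l := by
  rcases eq_or_ne l i with rfl | hli
  · simp [shiftMass, hij]
  rcases eq_or_ne l j with rfl | hlj
  · simp [shiftMass, hij.symm, sub_eq_add_neg]
  · simp [shiftMass, hli, hlj]

variable [Fintype ι]

theorem mem_sparseBox_of_card_fractionalCoords_le_one [DecidableEq ι]
    (hx : x ∈ cappedSimplex M k) (hfrac : #(fractionalCoords M x) ≤ 1) : x ∈ sparseBox M k := by
  refine ⟨hx.1, ?_⟩
  set supp : Finset ι := {i | x i ≠ 0}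
  by_contra! hk
  have hpos : ∀ i ∈ supp, 0 < x i := fun i hi =>
    (hx.1 i).1.lt_of_ne (Ne.symm (mem_filter.mp hi).2)
  -- all of the support except one coordinate `b` sits at the cap, forcing `∑ x > k M`
  obtain ⟨b, hb, hfrac_b⟩ : ∃ b ∈ supp, fractionalCoords M x ⊆ {b} := by
    rcases (fractionalCoords M x).eq_empty_or_nonempty with h | ⟨b, hb⟩
    · obtain ⟨b, hb⟩ := card_pos.mp (k.zero_le.trans_lt hk)
      exact ⟨b, hb, h ▸ empty_subset _⟩
    · refine ⟨b, mem_filter.mpr ⟨mem_univ b, (mem_fractionalCoords.mp hb).1.ne'⟩, fun c hc => ?_⟩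
      exact mem_singleton.mpr (card_le_one.mp hfrac c hc b hb)
  have hcap : ∀ c ∈ supp.erase b, x c = M := fun c hc => by
    obtain ⟨hcb, hc⟩ := mem_erase.mp hc
    by_contra hne
    exact hcb (mem_singleton.mp (hfrac_b
      (mem_fractionalCoords.mpr ⟨hpos c hc, (hx.1 c).2.lt_of_ne hne⟩)))
  have hM : 0 ≤ M := (hpos b hb).le.trans (hx.1 b).2
  have hkM : (k : ℝ) * M ≤ #(supp.erase b) * M := by
    rw [card_erase_of_mem hb]
    gcongr
    exact_mod_cast Nat.le_sub_one_of_lt hk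
  have hsum : x b + #(supp.erase b) * M ≤ ∑ i, x i := calc
    _ = ∑ i ∈ supp, x i := by
      rw [← add_sum_erase _ _ hb, sum_congr rfl hcap, sum_const, nsmul_eq_mul]
    _ ≤ ∑ i, x i := sum_le_sum_of_subset_of_nonneg (subset_univ _) fun i _ _ => (hx.1 i).1
  linarith [hx.2, hpos b hb]

variable [DecidableEq ι]

theorem shiftMass_mem_cappedSimplex (hx : x ∈ cappedSimplex M k) {i j : ι} (hij : i ≠ j) :
    shiftMass M x i j ∈ cappedSimplex M k := by
  have hδ : 0 ≤ min (M - x i) (x j) := le_min (sub_nonneg.2 (hx.1 i).2) (hx.1 j).1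
  have hδi := min_le_left (M - x i) (x j)
  have hδj := min_le_right (M - x i) (x j)
  refine ⟨fun l => ?_, ?_⟩
  · rw [shiftMass_apply hij]
    split_ifs with hli hlj
    · constructor <;> linarith [hx.1 i]
    · constructor <;> linarith [hx.1 j]
    · exact hx.1 l
  · simpa [shiftMass, sum_add_distrib, ← mul_sum, sum_sub_distrib] using hx.2

theorem fractionalCoords_shiftMass_ssubset {i j : ι} (hi : i ∈ fractionalCoords M x)
    (hj : j ∈ fractionalCoords M x) (hij : i ≠ j) :
    fractionalCoords M (shiftMass M x i j) ⊂ fractionalCoords M x := by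
  rw [ssubset_iff_of_subset]
  · rcases le_total (M - x i) (x j) with h | h
    · exact ⟨i, hi, by simp [shiftMass_apply hij, h]⟩
    · exact ⟨j, hj, by simp [shiftMass_apply hij, hij.symm, h]⟩
  · intro l hl
    rw [mem_fractionalCoords, shiftMass_apply hij] at hl
    split_ifs at hl with hli hlj
    · exact hli ▸ hi
    · exact hlj ▸ hj
    · exact mem_fractionalCoords.mpr hl

theorem mem_segment_shiftMass {i j : ι} (hi : i ∈ fractionalCoords M x)
    (hj : j ∈ fractionalCoords M x) :
    x ∈ segment ℝ (shiftMass M x i j) (shiftMass M x j i) := by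
  rw [mem_fractionalCoords] at hi hj
  have hδ : 0 < min (M - x i) (x j) := lt_min (by linarith) hj.1
  have hε : 0 < min (M - x j) (x i) := lt_min (by linarith) hi.1
  unfold shiftMass
  generalize min (M - x i) (x j) = δ at hδ ⊢
  generalize min (M - x j) (x i) = ε at hε ⊢
  refine ⟨ε / (δ + ε), δ / (δ + ε), by positivity, by positivity, by field_simp; ring, ?_⟩
  ext l
  simp only [Pi.add_apply, Pi.smul_apply, Pi.sub_apply, smul_eq_mul]
  field_simp
  ring

theorem cappedSimplex_subset_convexHull_sparseBox :
    cappedSimplex M k ⊆ convexHull ℝ (sparseBox (ι := ι) M k) := by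
  intro x hx
  induction hn : #(fractionalCoords M x) using Nat.strong_induction_on generalizing x with
  | _ n ih =>
  by_cases h : ∃ i ∈ fractionalCoords M x, ∃ j ∈ fractionalCoords M x, i ≠ j
  · obtain ⟨i, hi, j, hj, hij⟩ := h
    have shift_mem : ∀ {i j}, i ∈ fractionalCoords M x → j ∈ fractionalCoords M x → i ≠ j →
        shiftMass M x i j ∈ convexHull ℝ (sparseBox M k) := fun hi hj hij =>
      ih _ (hn ▸ card_lt_card (fractionalCoords_shiftMass_ssubset hi hj hij))
        (shiftMass_mem_cappedSimplex hx hij) rfl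
    exact (convex_convexHull ℝ _).segment_subset (shift_mem hi hj hij)
      (shift_mem hj hi hij.symm) (mem_segment_shiftMass hi hj)
  · push Not at h
    exact subset_convexHull ℝ _
      (mem_sparseBox_of_card_fractionalCoords_le_one hx (card_le_one.mpr h))

end CappedSimplex

namespace Seminorm

variable {ι : Type*} [DecidableEq ι]

structure IsSymmetricGauge (p : Seminorm ℝ (ι → ℝ)) : Prop where
  comp_perm : ∀ (e : Equiv.Perm ι) (x : ι → ℝ), p (x ∘ e) = p x
  update_neg : ∀ (x : ι → ℝ) (i : ι), p (Function.update x i (-x i)) = p x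

namespace IsSymmetricGauge

open Finset

variable {p : Seminorm ℝ (ι → ℝ)} (hp : p.IsSymmetricGauge)
include hp

theorem map_update_le {x : ι → ℝ} {i : ι} {t : ℝ} (ht : |t| ≤ |x i|) :
    p (Function.update x i t) ≤ p x := by
  have hseg : t ∈ segment ℝ (-x i) (x i) := by
    rw [segment_eq_uIcc, Set.mem_uIcc]
    rcases le_total 0 (x i) with h | h
    · exact .inl (abs_le.mp (abs_of_nonneg h ▸ ht))
    · exact .inr (by simpa [abs_of_nonpos h, and_comm] using abs_le.mp ht)
  obtain ⟨a, b, ha, hb, hab, rfl⟩ := hseg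
  have hupd : a • Function.update x i (-x i) + b • x =
      Function.update x i (a • -x i + b • x i) := by
    ext j
    rcases eq_or_ne j i with rfl | hj
    · simp
    · simp [hj, ← add_mul, hab]
  calc p (Function.update x i (a • -x i + b • x i))
      ≤ max (p (Function.update x i (-x i))) (p x) :=
        p.convexOn.le_max_of_mem_segment trivial trivial ⟨a, b, ha, hb, hab, hupd⟩
    _ = p x := by rw [hp.update_neg, max_self]

theorem mono [Fintype ι] {x y : ι → ℝ} (h : ∀ i, |x i| ≤ |y i|) : p x ≤ p y := by
  have key : ∀ s : Finset ι, p (s.piecewise x y) ≤ p y := by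
    intro s
    induction s using Finset.induction_on with
    | empty => simp
    | insert a s ha ih =>
      rw [piecewise_insert]
      refine (hp.map_update_le ?_).trans ih
      rw [piecewise_eq_of_notMem _ _ _ ha]
      exact h a
  simpa using key univ

theorem map_indicator_eq_of_card_eq [Fintype ι] {s t : Finset ι} (h : #s = #t) :
    p ((t : Set ι).indicator 1) = p ((s : Set ι).indicator 1) := by
  obtain ⟨σ, hσ⟩ := Equiv.Perm.exists_map_finset_eq s t h
  rw [← hp.comp_perm σ]
  congr 1
  ext i
  subst hσ
  by_cases hi : i ∈ s <;> simp [hi]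

theorem mul_map_indicator_pair_le [Fintype ι] {a b : ι} (hab : a ≠ b) (x : ι → ℝ) :
    (x a + x b) / 2 * p ((({a, b} : Finset ι) : Set ι).indicator 1) ≤ p x := by
  set y := (({a, b} : Finset ι) : Set ι).indicator x
  have hsym : ((x a + x b) / 2) • (({a, b} : Finset ι) : Set ι).indicator 1
      = (1 / 2 : ℝ) • (y + y ∘ Equiv.swap a b) := by
    ext k
    rcases eq_or_ne k a with rfl | hka
    · simp [y, hab]; ring
    rcases eq_or_ne k b with rfl | hkb
    · simp [y, hab.symm]; ring
    · simp [y, hka, hkb, Equiv.swap_apply_of_ne_of_ne]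
  calc _ ≤ ‖(x a + x b) / 2‖ * p ((({a, b} : Finset ι) : Set ι).indicator 1) := by
        gcongr
        exact le_abs_self _
    _ = (1 / 2) * p (y + y ∘ Equiv.swap a b) := by
        rw [← map_smul_eq_mul, hsym, map_smul_eq_mul, Real.norm_of_nonneg (by norm_num)]
    _ ≤ (1 / 2) * (p y + p (y ∘ Equiv.swap a b)) := by gcongr; exact map_add_le_add p _ _
    _ = p y := by rw [hp.comp_perm]; ring
    _ ≤ p x := hp.mono fun k => by
        simp only [y, Set.indicator_apply]
        split_ifs <;> simp

theorem map_le_of_mem_sparseBox [Fintype ι] {M : ℝ} {k : ℕ} (hM : 0 ≤ M) {x : ι → ℝ}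
    (hx : x ∈ sparseBox M k) {s : Finset ι} (hs : #s = k) :
    p x ≤ M * p ((s : Set ι).indicator 1) := by
  obtain ⟨t, hsupp, ht⟩ := exists_superset_card_eq (hs ▸ hx.2) (card_le_univ s)
  calc p x ≤ p (M • (t : Set ι).indicator 1) := hp.mono fun i => by
        by_cases hi : i ∈ t
        · simp [hi, abs_of_nonneg (hx.1 i).1, abs_of_nonneg hM, (hx.1 i).2]
        · have : x i = 0 := by
            by_contra h
            exact hi (hsupp (mem_filter.mpr ⟨mem_univ i, h⟩))
          simp [hi, this]
    _ = M * p ((s : Set ι).indicator 1) := by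
        rw [map_smul_eq_mul, Real.norm_of_nonneg hM, hp.map_indicator_eq_of_card_eq ht.symm]

theorem map_le_of_mem_cappedSimplex [Fintype ι] {M : ℝ} {k : ℕ} (hM : 0 ≤ M) {x : ι → ℝ}
    (hx : x ∈ cappedSimplex M k) {s : Finset ι} (hs : #s = k) :
    p x ≤ M * p ((s : Set ι).indicator 1) := by
  obtain ⟨y, hy, hxy⟩ := p.convexOn.exists_ge_of_mem_convexHull (Set.subset_univ _)
    (cappedSimplex_subset_convexHull_sparseBox hx)
  exact hxy.trans (hp.map_le_of_mem_sparseBox hM hy hs)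

end IsSymmetricGauge

end Seminorm

section SingularValueDecomposition

variable {ι : Type*} [Fintype ι] [DecidableEq ι]

theorem Matrix.exists_unitary_eq_mul_diagonal_of_conjTranspose_mul_self
    {A : Matrix ι ι ℂ} {σ : ι → ℝ}
    (hA : Aᴴ * A = diagonal fun i => ((σ i ^ 2 : ℝ) : ℂ)) :
    ∃ U : Matrix ι ι ℂ, Uᴴ * U = 1 ∧ A = U * diagonal fun i => (σ i : ℂ) := by
  set col : ι → EuclideanSpace ℂ ι := fun j => WithLp.toLp 2 fun k => A k j
  have hcol : ∀ i j, inner ℂ (col i) (col j) = if i = j then ((σ i ^ 2 : ℝ) : ℂ) else 0 := by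
    intro i j
    have := congrFun (congrFun hA i) j
    rw [diagonal_apply] at this
    rw [← this]
    simp [col, mul_apply, PiLp.inner_apply, mul_comm]
  -- the normalized nonzero columns of `A` are orthonormal; complete them to a basis
  set w : ι → EuclideanSpace ℂ ι := fun j => (σ j : ℂ)⁻¹ • col j
  have hw : Orthonormal ℂ ({j | σ j ≠ 0}.domRestrict w) := by
    rw [orthonormal_iff_ite]
    rintro ⟨i, hi⟩ ⟨j, hj⟩
    change inner ℂ (w i) (w j) = if (⟨i, hi⟩ : {j | σ j ≠ 0}) = ⟨j, hj⟩ then 1 else 0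
    simp only [w, inner_smul_left, inner_smul_right, hcol, Subtype.mk.injEq]
    split_ifs with hij
    · subst hij
      have : (σ i : ℂ) ≠ 0 := by exact_mod_cast hi
      rw [map_inv₀, Complex.conj_ofReal]
      push_cast
      field_simp
    · simp
  obtain ⟨b, hb⟩ := hw.exists_orthonormalBasis_extension_of_card_eq (by simp)
  refine ⟨(EuclideanSpace.basisFun ι ℂ).toBasis.toMatrix b.toBasis,
    (EuclideanSpace.basisFun ι ℂ).toMatrix_orthonormalBasis_conjTranspose_mul_self b, ?_⟩
  ext k j
  rw [mul_diagonal]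
  change A k j = b j k * σ j
  by_cases hj : σ j = 0
  · have : col j = 0 := inner_self_eq_zero.mp (by rw [hcol]; simp [hj])
    simpa [hj] using congrArg (· k) this
  · have : (σ j : ℂ) ≠ 0 := by exact_mod_cast hj
    rw [hb j hj]
    simp [w, col]
    field_simp

theorem Matrix.exists_unitary_mul_diagonal_sqrt_eigenvalues_mul (X : Matrix ι ι ℂ) :
    ∃ U V : Matrix ι ι ℂ, Uᴴ * U = 1 ∧ Vᴴ * V = 1 ∧
      X = U * (diagonal fun i =>
        (√((isHermitian_conjTranspose_mul_self X).eigenvalues i) : ℂ)) * V := by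
  set h := isHermitian_conjTranspose_mul_self X
  set W : Matrix ι ι ℂ := (h.eigenvectorUnitary : Matrix ι ι ℂ)
  have hW : W * Wᴴ = 1 := Unitary.coe_mul_star_self h.eigenvectorUnitary
  have hXW : (X * W)ᴴ * (X * W) = diagonal fun i => ((√(h.eigenvalues i) ^ 2 : ℝ) : ℂ) := by
    have := h.conjStarAlgAut_star_eigenvectorUnitary
    rw [Unitary.conjStarAlgAut_star_apply] at this
    simp_rw [Real.sq_sqrt (eigenvalues_conjTranspose_mul_self_nonneg X _)]
    convert this using 1
    · simp [W, Matrix.mul_assoc, star_eq_conjTranspose]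
    · rfl
  obtain ⟨U, hU, hXWU⟩ := exists_unitary_eq_mul_diagonal_of_conjTranspose_mul_self hXW
  refine ⟨U, Wᴴ, hU, by rwa [conjTranspose_conjTranspose], ?_⟩
  rw [← hXWU, Matrix.mul_assoc, hW, Matrix.mul_one]

end SingularValueDecomposition

namespace Seminorm

variable {ι : Type*} [DecidableEq ι]

noncomputable def realDiagonal (N : Seminorm ℂ (Matrix ι ι ℂ)) : Seminorm ℝ (ι → ℝ) :=
  (N.restrictScalars ℝ).comp
    ((diagonalLinearMap ι ℝ ℂ).comp (LinearMap.compLeft Complex.ofRealCLM.toLinearMap ι))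

@[simp]
theorem realDiagonal_apply (N : Seminorm ℂ (Matrix ι ι ℂ)) (x : ι → ℝ) :
    N.realDiagonal x = N (diagonal fun i => (x i : ℂ)) := rfl

variable [Fintype ι] {N : Seminorm ℂ (Matrix ι ι ℂ)}
  (hN : ∀ U V A : Matrix ι ι ℂ, Uᴴ * U = 1 → Vᴴ * V = 1 → N (U * A * V) = N A)
include hN

theorem map_submatrix_perm (σ : Equiv.Perm ι) (A : Matrix ι ι ℂ) :
    N (A.submatrix σ σ) = N A := by
  have hunitary : ∀ τ : Equiv.Perm ι, (τ.permMatrix ℂ)ᴴ * τ.permMatrix ℂ = 1 := fun τ => by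
    rw [conjTranspose_permMatrix, ← permMatrix_mul, mul_inv_cancel, permMatrix_one]
  have := hN _ _ A (hunitary σ) (hunitary σ⁻¹)
  rwa [PEquiv.toMatrix_toPEquiv_mul, PEquiv.mul_toMatrix_toPEquiv, submatrix_submatrix] at this

theorem map_mul_diagonal {u : ι → ℂ} (hu : ∀ i, star (u i) * u i = 1) (A : Matrix ι ι ℂ) :
    N (A * diagonal u) = N A := by
  simpa using hN 1 (diagonal u) A (by simp) (by
    rw [diagonal_conjTranspose, diagonal_mul_diagonal, ← diagonal_one]
    exact congrArg diagonal (funext hu))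

theorem isSymmetricGauge_realDiagonal : N.realDiagonal.IsSymmetricGauge where
  comp_perm σ x := by
    rw [realDiagonal_apply, realDiagonal_apply,
      ← map_submatrix_perm hN σ (diagonal fun i => (x i : ℂ)), submatrix_diagonal_equiv]
    rfl
  update_neg x i := by
    have hflip : ∀ j, star (Function.update (1 : ι → ℂ) i (-1) j) *
        Function.update (1 : ι → ℂ) i (-1) j = 1 := by
      intro j
      rcases eq_or_ne j i with rfl | h <;> simp [*]
    rw [realDiagonal_apply, realDiagonal_apply, ← map_mul_diagonal hN hflip,
      diagonal_mul_diagonal]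
    congr 2
    ext j
    rcases eq_or_ne j i with rfl | h <;> simp [*]

theorem map_eq_realDiagonal_sqrt_eigenvalues (X : Matrix ι ι ℂ) :
    N X = N.realDiagonal fun i => √((isHermitian_conjTranspose_mul_self X).eigenvalues i) := by
  obtain ⟨U, V, hU, hV, hX⟩ := X.exists_unitary_mul_diagonal_sqrt_eigenvalues_mul
  exact (congrArg N hX).trans (hN U V _ hU hV)

end Seminorm

theorem sortedDesc_eq_comp {d : ℕ} (v : Fin d → ℝ) :
    sortedDesc v = v ∘ (Fin.revPerm.trans (Tuple.sort v)) := rfl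

theorem antitone_sortedDesc {d : ℕ} (v : Fin d → ℝ) : Antitone (sortedDesc v) :=
  fun _ _ hkl => Tuple.monotone_sort v (Fin.rev_le_rev.mpr hkl)

theorem singularValues_nonneg {d : ℕ} (X : Matrix (Fin d) (Fin d) ℂ) (i : Fin d) :
    0 ≤ singularValues X i :=
  Real.sqrt_nonneg _

theorem Seminorm.map_eq_realDiagonal_singularValues {d : ℕ}
    {N : Seminorm ℂ (Matrix (Fin d) (Fin d) ℂ)}
    (hN : ∀ U V A : Matrix (Fin d) (Fin d) ℂ, Uᴴ * U = 1 → Vᴴ * V = 1 → N (U * A * V) = N A)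
    (X : Matrix (Fin d) (Fin d) ℂ) :
    N X = N.realDiagonal (singularValues X) := by
  rw [singularValues, sortedDesc_eq_comp, (isSymmetricGauge_realDiagonal hN).comp_perm,
    map_eq_realDiagonal_sqrt_eigenvalues hN]

theorem mem_cappedSimplex_max {d k : ℕ} (hd : 0 < d) (hk : 0 < k) {x : Fin d → ℝ}
    (hx : Antitone x) (hx_nonneg : ∀ i, 0 ≤ x i) :
    x ∈ cappedSimplex (max (x ⟨0, hd⟩) ((∑ i, x i) / k)) k := by
  refine ⟨fun i => ⟨hx_nonneg i, (hx (Nat.zero_le i.val)).trans (le_max_left _ _)⟩, ?_⟩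
  calc ∑ i, x i = k * ((∑ i, x i) / k) := by field_simp
    _ ≤ k * max (x ⟨0, hd⟩) ((∑ i, x i) / k) := by gcongr; exact le_max_right _ _

/-- For a unitarily invariant norm `N` on `d × d` complex matrices, with
`F = diag(1,1,0,…,0)`, every matrix `X` satisfies
`(σ₁(X) + σ₂(X))/2 ≤ N(X)/N(F) ≤ max(σ₁(X), (∑ i, σᵢ(X))/2)`. -/
theorem ui_norm_kyfan_bounds (d : ℕ) (hd : 2 ≤ d)
    (N : Matrix (Fin d) (Fin d) ℂ → ℝ)
    (hN_triangle : ∀ A B : Matrix (Fin d) (Fin d) ℂ, N (A + B) ≤ N A + N B)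
    (hN_smul : ∀ (a : ℂ) (A : Matrix (Fin d) (Fin d) ℂ), N (a • A) = ‖a‖ * N A)
    (hN_pos : ∀ A : Matrix (Fin d) (Fin d) ℂ, A ≠ 0 → 0 < N A)
    (hN_ui : ∀ U V A : Matrix (Fin d) (Fin d) ℂ,
      Uᴴ * U = 1 → Vᴴ * V = 1 → N (U * A * V) = N A)
    (X : Matrix (Fin d) (Fin d) ℂ)
    (F : Matrix (Fin d) (Fin d) ℂ)
    (hF : F = Matrix.diagonal (fun i : Fin d => if i.val < 2 then (1 : ℂ) else 0)) :
    (singularValues X ⟨0, by omega⟩ + singularValues X ⟨1, by omega⟩) / 2 ≤ N X / N F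
    ∧ N X / N F ≤ max (singularValues X ⟨0, by omega⟩) ((∑ i, singularValues X i) / 2) := by
  set q : Seminorm ℂ (Matrix (Fin d) (Fin d) ℂ) := Seminorm.of N hN_triangle hN_smul
  have hp := Seminorm.isSymmetricGauge_realDiagonal (N := q) hN_ui
  set s : Finset (Fin d) := {⟨0, by omega⟩, ⟨1, by omega⟩}
  have hX : N X = q.realDiagonal (singularValues X) := q.map_eq_realDiagonal_singularValues hN_ui X
  have hF' : N F = q.realDiagonal ((s : Set (Fin d)).indicator 1) := by
    rw [hF, Seminorm.realDiagonal_apply]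
    congr 2
    ext i
    have hs : i ∈ s ↔ i.val < 2 := by simp [s, Fin.ext_iff]; omega
    by_cases hi : i.val < 2 <;> simp [hi, hs]
  have hNF : 0 < N F := hN_pos F fun h => by
    simpa [hF] using congrFun (congrFun h ⟨0, by omega⟩) ⟨0, by omega⟩
  rw [le_div_iff₀ hNF, div_le_iff₀ hNF, hX, hF']
  exact ⟨hp.mul_map_indicator_pair_le (by simp) _,
    hp.map_le_of_mem_cappedSimplex (le_max_of_le_left (singularValues_nonneg X _))
      (mem_cappedSimplex_max _ two_pos (antitone_sortedDesc _) (singularValues_nonneg X))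
      (Finset.card_pair (by simp))⟩
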